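/- Let ρ be a state on ℂ^{d₁}⊗ℂ^{d₂}⊗ℂ^{d₃} that is biseparable across some bipartition. Then there exist two distinct subsystem indices k ≠ k' separated by that bipartition such that for all operators W_k ⪰ W̃_k ⪰ 0 on ℂ^{d_k} and W_{k'} ⪰ W̃_{k'} ⪰ 0 on ℂ^{d_{k'}}, one has Tr(𝒲^{(k,k')} ρ) ≥ 0, where 𝒲^{(k,k')} = (W_k⊗W_{k'} − W̃_k⊗W̃_{k'}) tensored with identity on the remaining subsystem (with appropriate subsystem ordering). -/

import Mathlib

open ComplexOrder Matrix Kronecker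

section

variable {d₁ d₂ d₃ : ℕ}

/-- Embed `A ⊗ B` for the bipartition `1|23` into the tripartite space. -/
def split1 (A : Matrix (Fin d₁) (Fin d₁) ℂ)
    (B : Matrix (Fin d₂ × Fin d₃) (Fin d₂ × Fin d₃) ℂ) :
    Matrix (Fin d₁ × Fin d₂ × Fin d₃) (Fin d₁ × Fin d₂ × Fin d₃) ℂ :=
  Matrix.of fun x y => A x.1 y.1 * B x.2 y.2

/-- Embed `A ⊗ B` for the bipartition `2|13` into the tripartite space. -/
def split2 (A : Matrix (Fin d₂) (Fin d₂) ℂ)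
    (B : Matrix (Fin d₁ × Fin d₃) (Fin d₁ × Fin d₃) ℂ) :
    Matrix (Fin d₁ × Fin d₂ × Fin d₃) (Fin d₁ × Fin d₂ × Fin d₃) ℂ :=
  Matrix.of fun x y => A x.2.1 y.2.1 * B (x.1, x.2.2) (y.1, y.2.2)

/-- Embed `A ⊗ B` for the bipartition `3|12` into the tripartite space. -/
def split3 (A : Matrix (Fin d₃) (Fin d₃) ℂ)
    (B : Matrix (Fin d₁ × Fin d₂) (Fin d₁ × Fin d₂) ℂ) :
    Matrix (Fin d₁ × Fin d₂ × Fin d₃) (Fin d₁ × Fin d₂ × Fin d₃) ℂ :=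
  Matrix.of fun x y => A x.2.2 y.2.2 * B (x.1, x.2.1) (y.1, y.2.1)

/-- `ρ` is biseparable across the bipartition `1|23`. -/
def Bisep1 (ρ : Matrix (Fin d₁ × Fin d₂ × Fin d₃) (Fin d₁ × Fin d₂ × Fin d₃) ℂ) : Prop :=
  ∃ (m : ℕ) (lam : Fin m → ℝ) (ρA : Fin m → Matrix (Fin d₁) (Fin d₁) ℂ)
    (ρB : Fin m → Matrix (Fin d₂ × Fin d₃) (Fin d₂ × Fin d₃) ℂ),
    (∀ q, 0 ≤ lam q) ∧ (∑ q, lam q = 1) ∧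
    (∀ q, (ρA q).PosSemidef ∧ (ρA q).trace = 1) ∧
    (∀ q, (ρB q).PosSemidef ∧ (ρB q).trace = 1) ∧
    ρ = ∑ q, (lam q : ℂ) • split1 (ρA q) (ρB q)

/-- `ρ` is biseparable across the bipartition `2|13`. -/
def Bisep2 (ρ : Matrix (Fin d₁ × Fin d₂ × Fin d₃) (Fin d₁ × Fin d₂ × Fin d₃) ℂ) : Prop :=
  ∃ (m : ℕ) (lam : Fin m → ℝ) (ρA : Fin m → Matrix (Fin d₂) (Fin d₂) ℂ)
    (ρB : Fin m → Matrix (Fin d₁ × Fin d₃) (Fin d₁ × Fin d₃) ℂ),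
    (∀ q, 0 ≤ lam q) ∧ (∑ q, lam q = 1) ∧
    (∀ q, (ρA q).PosSemidef ∧ (ρA q).trace = 1) ∧
    (∀ q, (ρB q).PosSemidef ∧ (ρB q).trace = 1) ∧
    ρ = ∑ q, (lam q : ℂ) • split2 (ρA q) (ρB q)

/-- `ρ` is biseparable across the bipartition `3|12`. -/
def Bisep3 (ρ : Matrix (Fin d₁ × Fin d₂ × Fin d₃) (Fin d₁ × Fin d₂ × Fin d₃) ℂ) : Prop :=
  ∃ (m : ℕ) (lam : Fin m → ℝ) (ρA : Fin m → Matrix (Fin d₃) (Fin d₃) ℂ)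
    (ρB : Fin m → Matrix (Fin d₁ × Fin d₂) (Fin d₁ × Fin d₂) ℂ),
    (∀ q, 0 ≤ lam q) ∧ (∑ q, lam q = 1) ∧
    (∀ q, (ρA q).PosSemidef ∧ (ρA q).trace = 1) ∧
    (∀ q, (ρB q).PosSemidef ∧ (ρB q).trace = 1) ∧
    ρ = ∑ q, (lam q : ℂ) • split3 (ρA q) (ρB q)

/-- The operator `X` on subsystems `(1,2)` tensored with the identity on subsystem `3`. -/
def pad12 (X : Matrix (Fin d₁ × Fin d₂) (Fin d₁ × Fin d₂) ℂ) :
    Matrix (Fin d₁ × Fin d₂ × Fin d₃) (Fin d₁ × Fin d₂ × Fin d₃) ℂ :=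
  Matrix.of fun x y => X (x.1, x.2.1) (y.1, y.2.1) * (if x.2.2 = y.2.2 then 1 else 0)

/-- The operator `X` on subsystems `(1,3)` tensored with the identity on subsystem `2`. -/
def pad13 (X : Matrix (Fin d₁ × Fin d₃) (Fin d₁ × Fin d₃) ℂ) :
    Matrix (Fin d₁ × Fin d₂ × Fin d₃) (Fin d₁ × Fin d₂ × Fin d₃) ℂ :=
  Matrix.of fun x y => X (x.1, x.2.2) (y.1, y.2.2) * (if x.2.1 = y.2.1 then 1 else 0)

/-- The operator `X` on subsystems `(2,3)` tensored with the identity on subsystem `1`. -/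
def pad23 (X : Matrix (Fin d₂ × Fin d₃) (Fin d₂ × Fin d₃) ℂ) :
    Matrix (Fin d₁ × Fin d₂ × Fin d₃) (Fin d₁ × Fin d₂ × Fin d₃) ℂ :=
  Matrix.of fun x y => X x.2 y.2 * (if x.1 = y.1 then 1 else 0)

/-- All witnesses `𝒲^{(1,2)}` built from locally ordered PSD operators have nonnegative
expectation value on `ρ`. -/
def NonnegPair12 (ρ : Matrix (Fin d₁ × Fin d₂ × Fin d₃) (Fin d₁ × Fin d₂ × Fin d₃) ℂ) :
    Prop :=
  ∀ (W₁ Wt₁ : Matrix (Fin d₁) (Fin d₁) ℂ) (W₂ Wt₂ : Matrix (Fin d₂) (Fin d₂) ℂ),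
    (W₁ - Wt₁).PosSemidef → Wt₁.PosSemidef → (W₂ - Wt₂).PosSemidef → Wt₂.PosSemidef →
    0 ≤ (pad12 (d₃ := d₃) (W₁ ⊗ₖ W₂ - Wt₁ ⊗ₖ Wt₂) * ρ).trace

/-- All witnesses `𝒲^{(1,3)}` built from locally ordered PSD operators have nonnegative
expectation value on `ρ`. -/
def NonnegPair13 (ρ : Matrix (Fin d₁ × Fin d₂ × Fin d₃) (Fin d₁ × Fin d₂ × Fin d₃) ℂ) :
    Prop :=
  ∀ (W₁ Wt₁ : Matrix (Fin d₁) (Fin d₁) ℂ) (W₃ Wt₃ : Matrix (Fin d₃) (Fin d₃) ℂ),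
    (W₁ - Wt₁).PosSemidef → Wt₁.PosSemidef → (W₃ - Wt₃).PosSemidef → Wt₃.PosSemidef →
    0 ≤ (pad13 (d₂ := d₂) (W₁ ⊗ₖ W₃ - Wt₁ ⊗ₖ Wt₃) * ρ).trace

/-- All witnesses `𝒲^{(2,3)}` built from locally ordered PSD operators have nonnegative
expectation value on `ρ`. -/
def NonnegPair23 (ρ : Matrix (Fin d₁ × Fin d₂ × Fin d₃) (Fin d₁ × Fin d₂ × Fin d₃) ℂ) :
    Prop :=
  ∀ (W₂ Wt₂ : Matrix (Fin d₂) (Fin d₂) ℂ) (W₃ Wt₃ : Matrix (Fin d₃) (Fin d₃) ℂ),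
    (W₂ - Wt₂).PosSemidef → Wt₂.PosSemidef → (W₃ - Wt₃).PosSemidef → Wt₃.PosSemidef →
    0 ≤ (pad23 (d₁ := d₁) (W₂ ⊗ₖ W₃ - Wt₂ ⊗ₖ Wt₃) * ρ).trace

/-!
The expectation of a product witness in a product state factorises:
`Tr((W ⊗ V)(A ⊗ B)) = Tr(W A) Tr(V B)`. Relabel the three subsystems so that `k` stands alone
and `k'` comes first in the other factor of the bipartition; the witness becomes
`W_k ⊗ (W_{k'} ⊗ 1) - W̃_k ⊗ (W̃_{k'} ⊗ 1)`, so on every product term of the biseparable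
decomposition its expectation is `a b - a' b'` with `a ≥ a' ≥ 0` and `b ≥ b' ≥ 0`, because the
trace of a product of positive semidefinite matrices is nonnegative. A convex combination keeps
the sign.
-/

def Equiv.prodLeftComm (α β γ : Type*) : α × β × γ ≃ β × α × γ where
  toFun x := (x.2.1, x.1, x.2.2)
  invFun x := (x.2.1, x.1, x.2.2)

namespace Matrix

variable {l m n p α 𝕜 : Type*} [RCLike 𝕜]

lemma trace_submatrix_equiv [Fintype m] [Fintype n] [AddCommMonoid α] (M : Matrix n n α)
    (e : m ≃ n) :
    (M.submatrix e e).trace = M.trace :=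
  e.sum_comp fun i => M i i

lemma sub_kronecker [Ring α] (A B : Matrix l m α) (C : Matrix n p α) :
    (A - B) ⊗ₖ C = A ⊗ₖ C - B ⊗ₖ C := by
  ext; simp [sub_mul]

lemma trace_kronecker_mul_kronecker [Fintype m] [Fintype n] [CommSemiring α]
    (W A : Matrix m m α) (V B : Matrix n n α) :
    (W ⊗ₖ V * A ⊗ₖ B).trace = (W * A).trace * (V * B).trace := by
  rw [← mul_kronecker_mul, trace_kronecker]

lemma PosSemidef.trace_mul_nonneg [Fintype n] {X A : Matrix n n 𝕜}
    (hX : X.PosSemidef) (hA : A.PosSemidef) : 0 ≤ (X * A).trace := by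
  classical
  open scoped MatrixOrder in
  obtain ⟨C, rfl⟩ := CStarAlgebra.nonneg_iff_eq_star_mul_self.mp hX.nonneg
  rw [star_eq_conjTranspose, Matrix.mul_assoc, trace_mul_comm]
  exact (hA.mul_mul_conjTranspose_same C).trace_nonneg

lemma PosSemidef.trace_mul_le_trace_mul [Fintype n] {X Y A : Matrix n n 𝕜}
    (hXY : (X - Y).PosSemidef) (hA : A.PosSemidef) : (Y * A).trace ≤ (X * A).trace := by
  rw [← sub_nonneg, ← trace_sub, ← Matrix.sub_mul]
  exact hXY.trace_mul_nonneg hA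

lemma trace_kronecker_sub_mul_kronecker_nonneg [Fintype m] [Fintype n]
    {W W' A : Matrix m m ℂ} {V V' B : Matrix n n ℂ}
    (hW : (W - W').PosSemidef) (hW' : W'.PosSemidef) (hV : (V - V').PosSemidef)
    (hV' : V'.PosSemidef) (hA : A.PosSemidef) (hB : B.PosSemidef) :
    0 ≤ ((W ⊗ₖ V - W' ⊗ₖ V') * A ⊗ₖ B).trace := by
  rw [Matrix.sub_mul, trace_sub, sub_nonneg, trace_kronecker_mul_kronecker,
    trace_kronecker_mul_kronecker]
  exact mul_le_mul (hW.trace_mul_le_trace_mul hA) (hV.trace_mul_le_trace_mul hB)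
    (hV'.trace_mul_nonneg hB) ((hW'.trace_mul_nonneg hA).trans (hW.trace_mul_le_trace_mul hA))

lemma trace_mul_sum_smul_nonneg [Fintype n] {ι : Type*} [Fintype ι] {X : Matrix n n ℂ}
    {lam : ι → ℝ} {ρ : ι → Matrix n n ℂ} (hlam : ∀ q, 0 ≤ lam q)
    (hρ : ∀ q, 0 ≤ (X * ρ q).trace) : 0 ≤ (X * ∑ q, (lam q : ℂ) • ρ q).trace := by
  simp only [Matrix.mul_sum, Matrix.mul_smul, trace_sum, trace_smul, smul_eq_mul]
  exact Finset.sum_nonneg fun q _ => mul_nonneg (by exact_mod_cast hlam q) (hρ q)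

lemma PosSemidef.sub_kronecker_one [Finite n] [Finite m] [DecidableEq m] {A B : Matrix n n 𝕜}
    (h : (A - B).PosSemidef) :
    (A ⊗ₖ (1 : Matrix m m 𝕜) - B ⊗ₖ 1).PosSemidef :=
  sub_kronecker A B (1 : Matrix m m 𝕜) ▸ h.kronecker .one

lemma trace_submatrix_mul_submatrix_kronecker_nonneg [Fintype m] [Fintype n] [Fintype p]
    (σ : p ≃ m × n) {W W' A : Matrix m m ℂ} {V V' B : Matrix n n ℂ}
    (hW : (W - W').PosSemidef) (hW' : W'.PosSemidef) (hV : (V - V').PosSemidef)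
    (hV' : V'.PosSemidef) (hA : A.PosSemidef) (hB : B.PosSemidef) :
    0 ≤ ((W ⊗ₖ V - W' ⊗ₖ V').submatrix σ σ * (A ⊗ₖ B).submatrix σ σ).trace := by
  rw [submatrix_mul_equiv, trace_submatrix_equiv]
  exact trace_kronecker_sub_mul_kronecker_nonneg hW hW' hV hV' hA hB

end Matrix

lemma pad12_kronecker_sub_kronecker (X₁ X₁' : Matrix (Fin d₁) (Fin d₁) ℂ)
    (X₂ X₂' : Matrix (Fin d₂) (Fin d₂) ℂ) :
    pad12 (d₃ := d₃) (X₁ ⊗ₖ X₂ - X₁' ⊗ₖ X₂') = X₁ ⊗ₖ (X₂ ⊗ₖ 1) - X₁' ⊗ₖ (X₂' ⊗ₖ 1) := by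
  ext x y
  simp only [pad12, of_apply, Matrix.sub_apply, kroneckerMap_apply, one_apply]
  split_ifs <;> ring

lemma pad12_kronecker_sub_kronecker_eq_submatrix (X₁ X₁' : Matrix (Fin d₁) (Fin d₁) ℂ)
    (X₂ X₂' : Matrix (Fin d₂) (Fin d₂) ℂ) :
    pad12 (d₃ := d₃) (X₁ ⊗ₖ X₂ - X₁' ⊗ₖ X₂') =
      (X₂ ⊗ₖ (X₁ ⊗ₖ 1) - X₂' ⊗ₖ (X₁' ⊗ₖ 1)).submatrix
        (Equiv.prodLeftComm _ _ _) (Equiv.prodLeftComm _ _ _) := by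
  ext x y
  simp only [pad12, Equiv.prodLeftComm, Equiv.coe_fn_mk, of_apply, Matrix.sub_apply,
    submatrix_apply, kroneckerMap_apply, one_apply]
  split_ifs <;> ring

lemma pad13_kronecker_sub_kronecker_eq_submatrix (X₁ X₁' : Matrix (Fin d₁) (Fin d₁) ℂ)
    (X₃ X₃' : Matrix (Fin d₃) (Fin d₃) ℂ) :
    pad13 (d₂ := d₂) (X₁ ⊗ₖ X₃ - X₁' ⊗ₖ X₃') =
      (X₃ ⊗ₖ (X₁ ⊗ₖ 1) - X₃' ⊗ₖ (X₁' ⊗ₖ 1)).submatrix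
        ((Equiv.prodAssoc _ _ _).symm.trans (Equiv.prodComm _ _))
        ((Equiv.prodAssoc _ _ _).symm.trans (Equiv.prodComm _ _)) := by
  ext x y
  simp only [pad13, Equiv.trans_apply, Equiv.prodAssoc_symm_apply, Equiv.prodComm_apply, Prod.swap,
    of_apply, Matrix.sub_apply, submatrix_apply, kroneckerMap_apply, one_apply]
  split_ifs <;> ring

theorem nonnegPair12_of_bisep1
    {ρ : Matrix (Fin d₁ × Fin d₂ × Fin d₃) (Fin d₁ × Fin d₂ × Fin d₃) ℂ}
    (h : Bisep1 ρ) : NonnegPair12 ρ := by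
  obtain ⟨m, lam, ρA, ρB, hlam, -, hA, hB, rfl⟩ := h
  intro W₁ Wt₁ W₂ Wt₂ hW₁ hWt₁ hW₂ hWt₂
  rw [pad12_kronecker_sub_kronecker]
  exact trace_mul_sum_smul_nonneg hlam fun q =>
    trace_submatrix_mul_submatrix_kronecker_nonneg (Equiv.refl _) hW₁ hWt₁
      hW₂.sub_kronecker_one (hWt₂.kronecker .one) (hA q).1 (hB q).1

theorem nonnegPair12_of_bisep2
    {ρ : Matrix (Fin d₁ × Fin d₂ × Fin d₃) (Fin d₁ × Fin d₂ × Fin d₃) ℂ}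
    (h : Bisep2 ρ) : NonnegPair12 ρ := by
  obtain ⟨m, lam, ρA, ρB, hlam, -, hA, hB, rfl⟩ := h
  intro W₁ Wt₁ W₂ Wt₂ hW₁ hWt₁ hW₂ hWt₂
  rw [pad12_kronecker_sub_kronecker_eq_submatrix]
  exact trace_mul_sum_smul_nonneg hlam fun q =>
    trace_submatrix_mul_submatrix_kronecker_nonneg _ hW₂ hWt₂
      hW₁.sub_kronecker_one (hWt₁.kronecker .one) (hA q).1 (hB q).1

theorem nonnegPair13_of_bisep3
    {ρ : Matrix (Fin d₁ × Fin d₂ × Fin d₃) (Fin d₁ × Fin d₂ × Fin d₃) ℂ}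
    (h : Bisep3 ρ) : NonnegPair13 ρ := by
  obtain ⟨m, lam, ρA, ρB, hlam, -, hA, hB, rfl⟩ := h
  intro W₁ Wt₁ W₃ Wt₃ hW₁ hWt₁ hW₃ hWt₃
  rw [pad13_kronecker_sub_kronecker_eq_submatrix]
  exact trace_mul_sum_smul_nonneg hlam fun q =>
    trace_submatrix_mul_submatrix_kronecker_nonneg _ hW₃ hWt₃
      hW₁.sub_kronecker_one (hWt₁.kronecker .one) (hA q).1 (hB q).1

theorem stmt_15_general (ρ : Matrix (Fin d₁ × Fin d₂ × Fin d₃) (Fin d₁ × Fin d₂ × Fin d₃) ℂ) :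
    (Bisep1 ρ → NonnegPair12 ρ ∨ NonnegPair13 ρ) ∧
    (Bisep2 ρ → NonnegPair12 ρ ∨ NonnegPair23 ρ) ∧
    (Bisep3 ρ → NonnegPair13 ρ ∨ NonnegPair23 ρ) :=
  ⟨fun h => .inl (nonnegPair12_of_bisep1 h), fun h => .inl (nonnegPair12_of_bisep2 h),
    fun h => .inl (nonnegPair13_of_bisep3 h)⟩

/-- If a tripartite state `ρ` is biseparable across some bipartition, then there are two
distinct subsystems `k ≠ k'` separated by that bipartition such that every locally ordered
witness `𝒲^{(k,k')}` has nonnegative expectation value on `ρ`. -/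
theorem stmt_15 (ρ : Matrix (Fin d₁ × Fin d₂ × Fin d₃) (Fin d₁ × Fin d₂ × Fin d₃) ℂ)
    (hρ : ρ.PosSemidef) (hρ1 : ρ.trace = 1) :
    (Bisep1 ρ → NonnegPair12 ρ ∨ NonnegPair13 ρ) ∧
    (Bisep2 ρ → NonnegPair12 ρ ∨ NonnegPair23 ρ) ∧
    (Bisep3 ρ → NonnegPair13 ρ ∨ NonnegPair23 ρ) :=
  stmt_15_general ρ

end
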